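/- arXiv:2404.13577 — 2 statements merged into one kernel-verified Lean document; each statement's English description precedes it below -/
import Mathlib

section
/- The word f = 10010110 is tilde-non-isometric: u = 100101010110 and v = 100110100110 are f-free, dist~(u,v) = 2, and every length-2 tilde-transformation from u to v has an intermediate word containing f as a factor. -/
/-- One tilde edit step: a single-bit replacement or a swap of two adjacent distinct symbols. -/
def tildeStep (u v : List Bool) : Prop :=
  (∃ i, i < u.length ∧ v = u.set i (!(u.getD i false))) ∨
  (∃ i, i + 1 < u.length ∧ u.getD i false ≠ u.getD (i+1) false ∧
    v = (u.set i (u.getD (i+1) false)).set (i+1) (u.getD i false))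

/-- A chain of `d` tilde steps from `u` to `v`. -/
def tildeChain : ℕ → List Bool → List Bool → Prop
  | 0, u, v => u = v
  | d+1, u, v => ∃ w, tildeStep u w ∧ tildeChain d w v

/-- The tilde-distance: minimum number of replacements and adjacent swaps. -/
noncomputable def tildeDist (u v : List Bool) : ℕ :=
  sInf {d | tildeChain d u v}

/-- `f` occurs as a contiguous factor of `w`. -/
def isFactor (f w : List Bool) : Prop := ∃ s t, w = s ++ f ++ t

/-- `w` is `f`-free. -/
def fFree (f w : List Bool) : Prop := ¬ isFactor f w

/-- A chain of `d` tilde steps from `u` to `v` all of whose intermediate words are `f`-free. -/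
def freeTildeChain (f : List Bool) : ℕ → List Bool → List Bool → Prop
  | 0, u, v => u = v
  | d+1, u, v => ∃ w, tildeStep u w ∧ fFree f w ∧ freeTildeChain f d w v

/-- `f` is tilde-isometric. -/
def tildeIsometric (f : List Bool) : Prop :=
  ∀ u v : List Bool, u.length = v.length → f.length ≤ u.length →
    fFree f u → fFree f v → freeTildeChain f (tildeDist u v) u v

/-- Replacement at (0-indexed) position `i`. -/
def repl (w : List Bool) (i : ℕ) : List Bool := w.set i (!(w.getD i false))

/-- Swap of positions `i` and `i+1` (0-indexed). -/
def swap (w : List Bool) (i : ℕ) : List Bool :=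
  (w.set i (w.getD (i+1) false)).set (i+1) (w.getD i false)

/-- Hamming distance between equal-length binary words. -/
def hammingDistL (u v : List Bool) : ℕ :=
  ((List.range u.length).filter (fun i => u.getD i false != v.getD i false)).length

/-- One Hamming edit step: a single-bit replacement. -/
def hammStep (u v : List Bool) : Prop :=
  ∃ i, i < u.length ∧ v = u.set i (!(u.getD i false))

/-- A chain of `d` Hamming steps from `u` to `v`, all intermediate words `f`-free. -/
def freeHammChain (f : List Bool) : ℕ → List Bool → List Bool → Prop
  | 0, u, v => u = v
  | d+1, u, v => ∃ w, hammStep u w ∧ fFree f w ∧ freeHammChain f d w v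

/-- `f` is Hamming-isometric. -/
def hammIsometric (f : List Bool) : Prop :=
  ∀ u v : List Bool, u.length = v.length → f.length ≤ u.length →
    fFree f u → fFree f v → freeHammChain f (hammingDistL u v) u v

instance isFactorDec (f w : List Bool) : Decidable (isFactor f w) :=
  decidable_of_iff (f <:+: w) (by
    constructor
    · rintro ⟨s, t, rfl⟩; exact ⟨s, t, rfl⟩
    · rintro ⟨s, t, rfl⟩; exact ⟨s, t, rfl⟩)

instance tildeStepDec (u v : List Bool) : Decidable (tildeStep u v) :=
  decidable_of_iff
    ((∃ i, i < u.length ∧ v = u.set i (!(u.getD i false))) ∨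
     (∃ i, i < u.length ∧ (i + 1 < u.length ∧ u.getD i false ≠ u.getD (i+1) false ∧
       v = (u.set i (u.getD (i+1) false)).set (i+1) (u.getD i false))))
    (by
      constructor
      · rintro (h | ⟨i, _, h⟩)
        · exact Or.inl h
        · exact Or.inr ⟨i, h⟩
      · rintro (h | ⟨i, h1, h2, h3⟩)
        · exact Or.inl h
        · exact Or.inr ⟨i, Nat.lt_of_succ_lt h1, h1, h2, h3⟩)

/-- All one-step neighbors of `u`. -/
def nbrs (u : List Bool) : List (List Bool) :=
  ((List.range u.length).map (fun i => u.set i (!(u.getD i false)))) ++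
  ((List.range u.length).map
    (fun i => (u.set i (u.getD (i+1) false)).set (i+1) (u.getD i false)))

lemma mem_nbrs_of_step {u w : List Bool} (h : tildeStep u w) : w ∈ nbrs u := by
  rcases h with ⟨i, hi, rfl⟩ | ⟨i, hi, _, rfl⟩
  · exact List.mem_append_left _ (List.mem_map.2 ⟨i, List.mem_range.2 hi, rfl⟩)
  · exact List.mem_append_right _
      (List.mem_map.2 ⟨i, List.mem_range.2 (Nat.lt_of_succ_lt hi), rfl⟩)

theorem stmt14 :
    fFree [true, false, false, true, false, true, true, false] [true, false, false, true, false, true, false, true, false, true, true, false] ∧ fFree [true, false, false, true, false, true, true, false] [true, false, false, true, true, false, true, false, false, true, true, false] ∧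
    tildeDist [true, false, false, true, false, true, false, true, false, true, true, false] [true, false, false, true, true, false, true, false, false, true, true, false] = 2 ∧
    (∀ w : List Bool, tildeStep [true, false, false, true, false, true, false, true, false, true, true, false] w → tildeStep w [true, false, false, true, true, false, true, false, false, true, true, false] → isFactor [true, false, false, true, false, true, true, false] w) ∧
    ¬ tildeIsometric [true, false, false, true, false, true, true, false] := by
  set f : List Bool := [true, false, false, true, false, true, true, false] with hf
  set u : List Bool := [true, false, false, true, false, true, false, true, false, true, true, false] with hu
  set v : List Bool := [true, false, false, true, true, false, true, false, false, true, true, false] with hv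
  have hfu : fFree f u := by show ¬ isFactor f u; decide
  have hfv : fFree f v := by show ¬ isFactor f v; decide
  have hchain2 : tildeChain 2 u v := by
    refine ⟨[true, false, false, true, true, false, false, true, false, true, true, false],
      Or.inr ⟨4, by decide, by decide, by decide⟩,
      v, Or.inr ⟨6, by decide, by decide, by decide⟩, rfl⟩
  have hkey : ∀ w : List Bool, tildeStep u w → tildeStep w v → isFactor f w := by
    intro w h1 h2
    have hmem : w ∈ nbrs u := mem_nbrs_of_step h1
    have : ∀ x ∈ nbrs u, tildeStep x v → isFactor f x := by decide
    exact this w hmem h2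
  have hdist : tildeDist u v = 2 := by
    refine le_antisymm (Nat.sInf_le hchain2) (le_csInf ⟨2, hchain2⟩ ?_)
    intro d hd
    match d with
    | 0 => exact absurd hd (show u ≠ v by decide)
    | 1 =>
      exfalso
      obtain ⟨w, hs, hw⟩ := hd
      rw [show tildeChain 0 w v = (w = v) from rfl] at hw
      subst hw
      exact absurd hs (by decide)
    | (n+2) => omega
  refine ⟨hfu, hfv, hdist, hkey, ?_⟩
  intro hiso
  have h := hiso u v (by decide) (by decide) hfu hfv
  rw [hdist] at h
  obtain ⟨w, hs1, hfw, w', hs2, _, hw'⟩ := h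
  rw [show freeTildeChain f 0 w' v = (w' = v) from rfl] at hw'
  subst hw'
  exact hfw (hkey w hs1 hs2)
end

section
/- If a binary word f has a 2-tilde-error overlap of shift r realized by two replacements (R_i, R_j) with i < j, and the word β = pre_r(f) · R_j(f) contains f as a factor, then r is even, j − i = r/2, and f[i .. i + r/2 − 1] = f[j .. j + r/2 − 1]. -/
/-! The occurrence of `f` at offset `p ≤ r` in `β` gives two "near-periods" of `f`, each broken
at a single position: comparing the occurrence with the copy `R_j(f)` inside `β` gives period
`q = r - p` with defect at `j`, and composing it with the overlap gives period `p` with defect at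
`q + i`. Going from `f[u]` to `f[u + p + q]` along either period must give the same result, so the
two defects obey an XOR identity; evaluating it at `u = i` and `u = j` forces `p = q` and
`j = i + q`, whence `r = 2q`, and `f[j + t] = f[i + t]` for `t < q` is the near-period `q` itself. -/

def NearPeriodic (g : ℕ → Bool) (n p d : ℕ) : Prop :=
  ∀ u, u + p < n → g (u + p) = (g u ^^ decide (u = d))

namespace NearPeriodic

variable {g : ℕ → Bool} {n p q a b : ℕ}

theorem xor_defects_comm (hp : NearPeriodic g n p a) (hq : NearPeriodic g n q b) {u : ℕ}
    (hu : u + p + q < n) :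
    (decide (u = a) ^^ decide (u + p = b)) = (decide (u = b) ^^ decide (u + q = a)) := by
  have hpq := hq (u + p) hu
  have hqp := hp (u + q) (by omega)
  rw [hp u (by omega)] at hpq
  rw [hq u (by omega), show u + q + p = u + p + q by omega] at hqp
  simpa [Bool.xor_assoc] using hpq.symm.trans hqp

theorem eq_of_defects {i j : ℕ} (hp : NearPeriodic g n p (q + i)) (hq : NearPeriodic g n q j)
    (hij : i < j) (hpq : 0 < p + q) (hj : j + p + q < n) : p = q ∧ j = i + q := by
  have at_i := hp.xor_defects_comm hq (u := i) (by omega)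
  have at_j := hp.xor_defects_comm hq (u := j) hj
  grind

end NearPeriodic

@[simp]
theorem length_repl (w : List Bool) (m : ℕ) : (repl w m).length = w.length :=
  List.length_set

theorem getD_repl_of_lt (w : List Bool) (m : ℕ) {k : ℕ} (hk : k < w.length) :
    (repl w m).getD k false = (w.getD k false ^^ decide (k = m)) := by
  by_cases h : k = m
  · subst h
    simp [repl, hk]
  · simp [repl, List.getD_eq_getElem?_getD, Ne.symm h, h]

theorem getD_add_of_overlap {f : List Bool} {r i j : ℕ}
    (hov : f.drop r = repl (repl (f.take (f.length - r)) i) j) {k : ℕ} (hk : r + k < f.length) :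
    f.getD (r + k) false = (f.getD k false ^^ decide (k = i) ^^ decide (k = j)) := by
  have hk' := congrArg (·.getD k false) hov
  rw [getD_repl_of_lt _ _ (by simp only [length_repl, List.length_take]; omega),
    getD_repl_of_lt _ _ (by simp only [List.length_take]; omega)] at hk'
  simp only [List.getD_eq_getElem?_getD, List.getElem?_drop, List.getElem?_take,
    show k < f.length - r by omega] at hk'
  simpa using hk'

theorem exists_getD_eq_of_isFactor {f w : List Bool} (h : isFactor f w) :
    ∃ p, p + f.length ≤ w.length ∧ ∀ m < f.length, f.getD m false = w.getD (p + m) false := by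
  obtain ⟨s, t, rfl⟩ := h
  refine ⟨s.length, by simp, fun m hm => ?_⟩
  rw [List.append_assoc, List.getD_append_right _ _ _ _ (by omega), Nat.add_sub_cancel_left,
    List.getD_append _ _ _ _ hm]

section Occurrence

variable {f : List Bool} {r i j p : ℕ}

theorem nearPeriodic_sub_of_occurrence (hpr : p ≤ r) (hr : r ≤ f.length)
    (hocc : ∀ m < f.length, f.getD m false = (f.take r ++ repl f j).getD (p + m) false) :
    NearPeriodic (f.getD · false) f.length (r - p) j := by
  intro u hu
  dsimp only
  rw [hocc _ hu, List.getD_append_right _ _ _ _ (by grind), List.length_take,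
    min_eq_left hr, show p + (u + (r - p)) - r = u by omega, getD_repl_of_lt _ _ (by omega)]

theorem nearPeriodic_of_occurrence_of_overlap (hpr : p ≤ r) (hr : r ≤ f.length)
    (hov : f.drop r = repl (repl (f.take (f.length - r)) i) j)
    (hocc : ∀ m < f.length, f.getD m false = (f.take r ++ repl f j).getD (p + m) false) :
    NearPeriodic (f.getD · false) f.length p (r - p + i) := by
  intro u hu
  have hβ := hocc u (by omega)
  by_cases hur : p + u < r
  · rw [List.getD_append _ _ _ _ (by grind)] at hβ
    simp only [List.getD_eq_getElem?_getD, List.getElem?_take_of_lt hur] at hβ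
    simp [add_comm u, hβ, show u ≠ r - p + i by omega]
  · rw [List.getD_append_right _ _ _ _ (by grind), List.length_take, min_eq_left hr,
      getD_repl_of_lt _ _ (by omega)] at hβ
    have hk := getD_add_of_overlap hov (k := p + u - r) (by omega)
    rw [show r + (p + u - r) = u + p by omega] at hk
    have hdefect : decide (p + u - r = i) = decide (u = r - p + i) := by
      simp only [decide_eq_decide]
      omega
    simp only [hk, hβ, hdefect, Bool.xor_assoc, Bool.xor_comm (decide (u = r - p + i))]

end Occurrence

theorem stmt17_general (f : List Bool) (n r i j : ℕ) (hn : f.length = n)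
    (hr0 : 0 < r) (hij : i < j) (hj : j < n - r)
    (hov : f.drop r = repl (repl (f.take (n - r)) i) j)
    (hocc : isFactor f (f.take r ++ repl f j)) :
    r % 2 = 0 ∧ j - i = r / 2 ∧
    (∀ t : ℕ, t < r / 2 → f.getD (i + t) false = f.getD (j + t) false) := by
  subst hn
  obtain ⟨p, hpn, hocc⟩ := exists_getD_eq_of_isFactor hocc
  have hpr : p ≤ r := by
    simp only [List.length_append, List.length_take, length_repl] at hpn
    omega
  have hq := nearPeriodic_sub_of_occurrence hpr (by omega) hocc
  have hp := nearPeriodic_of_occurrence_of_overlap hpr (by omega) hov hocc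
  obtain ⟨hpq, rfl⟩ := hp.eq_of_defects hq hij (by omega) (by omega)
  refine ⟨by omega, by omega, fun t ht => ?_⟩
  have hshift := hq (i + t) (by omega)
  simp only [show i + t ≠ i + (r - p) by omega, decide_false, Bool.xor_false] at hshift
  rw [← hshift, show i + t + (r - p) = i + (r - p) + t by omega]

theorem stmt17 (f : List Bool) (n r i j : ℕ) (hn : f.length = n)
    (hr0 : 0 < r) (hrn : r < n) (hij : i < j) (hj : j < n - r)
    (hov : f.drop r = repl (repl (f.take (n - r)) i) j)
    (hi : f.getD i false ≠ f.getD (i + r) false)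
    (hjj : f.getD j false ≠ f.getD (j + r) false)
    (hocc : isFactor f (f.take r ++ repl f j)) :
    r % 2 = 0 ∧ j - i = r / 2 ∧
    (∀ t : ℕ, t < r / 2 → f.getD (i + t) false = f.getD (j + t) false) :=
  stmt17_general f n r i j hn hr0 hij hj hov hocc
end
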